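/- arXiv:0912.0532 — 2 statements merged into one kernel-verified Lean document; each statement's English description precedes it below -/
import Mathlib

section
/- For every integer n ≥ 1, the number of pairs (x, y) of nonnegative integers satisfying g_n·x + g_{n+2}·y ≤ g_n·g_{n+2} equals (g_n + 1)(g_{n+2} + 1)/2 + 1, and this number also equals (g_{n+1}² + 3 g_{n+1})/2 + 2. (This counts the lattice points in the closed triangle with vertices (0,0), (g_{n+2},0), and (0,g_n).) -/
/-!
The box `[0, b] × [0, a]` is covered by the lattice points on or below the hypotenuse
`a x + b y = a b` and those on or above it. The point reflection `(x, y) ↦ (b - x, a - y)` of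
the box exchanges the two halves, and for coprime `a, b` the only lattice points on the
hypotenuse are its endpoints, so twice the number of points in the triangle is
`(a + 1)(b + 1) + 2`. For `a = g_n = f_{2n-1}`, `b = g_{n+2} = f_{2n+3}` coprimality comes from
`gcd (f_m, f_k) = f_{gcd (m, k)}`, and the second formula from `a + b = 3 g_{n+1}` and Catalan's
identity `a b = g_{n+1}² + 1`.
-/

/-- The odd-index Fibonacci numbers `g n = f_{2n-1}`:
`g 1 = 1`, `g 2 = 2`, `g 3 = 5`, `g 4 = 13`, … -/
def g (n : ℕ) : ℕ := Nat.fib (2 * n - 1)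

def latticeTriangle (a b : ℕ) : Set (ℕ × ℕ) := {p | a * p.1 + b * p.2 ≤ a * b}

section LatticeTriangle

open Finset

variable {a b : ℕ}

lemma latticeTriangle_eq_filter (ha : 0 < a) (hb : 0 < b) :
    latticeTriangle a b = ↑{p ∈ Iic b ×ˢ Iic a | a * p.1 + b * p.2 ≤ a * b} := by
  ext ⟨x, y⟩
  simp only [latticeTriangle, Set.mem_ofPred_eq, coe_filter, mem_product, mem_Iic]
  refine ⟨fun h ↦ ⟨⟨?_, ?_⟩, h⟩, And.right⟩
  · exact le_of_mul_le_mul_left (le_of_add_le_left h) ha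
  · exact le_of_mul_le_mul_left ((mul_comm b a).symm ▸ le_of_add_le_right h) hb

lemma mul_tsub_add_mul_tsub_add_mul_add_mul {x y : ℕ} (hx : x ≤ b) (hy : y ≤ a) :
    a * (b - x) + b * (a - y) + (a * x + b * y) = 2 * (a * b) := by
  zify [hx, hy]
  ring

lemma card_filter_le_eq_card_filter_ge :
    #{p ∈ Iic b ×ˢ Iic a | a * p.1 + b * p.2 ≤ a * b} =
      #{p ∈ Iic b ×ˢ Iic a | a * b ≤ a * p.1 + b * p.2} := by
  refine card_nbij' (fun p ↦ (b - p.1, a - p.2)) (fun p ↦ (b - p.1, a - p.2)) ?_ ?_ ?_ ?_ <;>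
    rintro ⟨x, y⟩ hp <;>
    simp only [coe_filter, mem_product, mem_Iic, Set.mem_ofPred_eq] at hp ⊢ <;>
    have := mul_tsub_add_mul_tsub_add_mul_add_mul (a := a) hp.1.1 hp.1.2
  · refine ⟨⟨?_, ?_⟩, ?_⟩ <;> omega
  · refine ⟨⟨?_, ?_⟩, ?_⟩ <;> omega
  · ext <;> simp only <;> omega
  · ext <;> simp only <;> omega

lemma eq_or_eq_of_mul_add_mul_eq_mul (ha : 0 < a) (hb : 0 < b) (hab : a.Coprime b) {x y : ℕ}
    (h : a * x + b * y = a * b) : (x, y) = (b, 0) ∨ (x, y) = (0, a) := by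
  obtain ⟨k, rfl⟩ : a ∣ y := hab.dvd_of_dvd_mul_left ⟨b - x, by rw [Nat.mul_sub]; omega⟩
  have hk : x + b * k = b := by
    apply Nat.eq_of_mul_eq_mul_left ha
    linarith
  rcases Nat.lt_or_ge k 1 with hk0 | hk1
  · left
    simp_all
  · right
    have : b * k ≤ b := by omega
    have : k = 1 := by nlinarith
    simp_all

theorem two_mul_ncard_latticeTriangle (ha : 0 < a) (hb : 0 < b) (hab : a.Coprime b) :
    2 * (latticeTriangle a b).ncard = (a + 1) * (b + 1) + 2 := by
  set box := Iic b ×ˢ Iic a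
  set below := {p ∈ box | a * p.1 + b * p.2 ≤ a * b}
  set above := {p ∈ box | a * b ≤ a * p.1 + b * p.2}
  have h_union : below ∪ above = box := by
    rw [← filter_or, filter_true_of_mem fun p _ ↦ le_total _ _]
  have h_inter : below ∩ above = {(b, 0), (0, a)} := by
    ext ⟨x, y⟩
    simp only [below, above, box, ← filter_and, mem_filter, mem_product, mem_Iic,
      ← le_antisymm_iff, mem_insert, mem_singleton]
    constructor
    · exact fun h ↦ eq_or_eq_of_mul_add_mul_eq_mul ha hb hab h.2
    · rintro (h | h) <;> simp_all [mul_comm]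
  have h_count : #below + #above = (a + 1) * (b + 1) + 2 := by
    rw [← card_union_add_card_inter, h_union, h_inter, card_pair (by simp [hb.ne']),
      card_product, Nat.card_Iic, Nat.card_Iic, mul_comm]
  have h_symm : #below = #above := card_filter_le_eq_card_filter_ge
  have h_ncard : (latticeTriangle a b).ncard = #below := by
    rw [latticeTriangle_eq_filter ha hb, Set.ncard_coe_finset]
  omega

end LatticeTriangle

namespace Nat

lemma fib_add_fib_add_four (k : ℕ) : fib k + fib (k + 4) = 3 * fib (k + 2) := by
  have h₂ : fib (k + 2) = fib k + fib (k + 1) := fib_add_two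
  have h₃ : fib (k + 3) = fib (k + 1) + fib (k + 2) := fib_add_two
  have h₄ : fib (k + 4) = fib (k + 2) + fib (k + 3) := fib_add_two
  omega

lemma fib_mul_fib_add_four_of_odd {k : ℕ} (hk : Odd k) :
    fib k * fib (k + 4) = fib (k + 2) ^ 2 + 1 := by
  have h := Int.fib_add_sq_sub_fib_mul_fib_add_two_mul k 2
  rw [Int.natAbs_natCast, hk.neg_one_pow, Int.fib_two, show (k : ℤ) + 2 * 2 = (k + 4 : ℕ) by
    push_cast; ring, show (k : ℤ) + 2 = (k + 2 : ℕ) by push_cast; ring] at h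
  simp only [Int.fib_natCast] at h
  zify
  linarith

lemma coprime_fib_fib_add_four_of_odd {k : ℕ} (hk : Odd k) : (fib k).Coprime (fib (k + 4)) := by
  rw [Coprime, ← fib_gcd, show k + 4 = k + 2 ^ 2 from rfl, gcd_self_add_right,
    (hk.coprime_two_right.pow_right 2).gcd_eq_one, fib_one]

end Nat

/-- **Equation (2.13) (e:Tn).** For `n ≥ 1`, the number of lattice points in the
closed triangle with vertices `(0,0)`, `(g_{n+2}, 0)`, `(0, g_n)` — i.e. the
number of pairs `(x,y) ∈ ℕ²` with `g_n·x + g_{n+2}·y ≤ g_n·g_{n+2}` — equals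
`(g_n+1)(g_{n+2}+1)/2 + 1`, which also equals `(g_{n+1}² + 3g_{n+1})/2 + 2`
(both stated here with denominators cleared). -/
theorem stmt_9 (n : ℕ) (hn : 1 ≤ n) :
    2 * Set.ncard {p : ℕ × ℕ | g n * p.1 + g (n + 2) * p.2 ≤ g n * g (n + 2)}
      = (g n + 1) * (g (n + 2) + 1) + 2 ∧
    2 * Set.ncard {p : ℕ × ℕ | g n * p.1 + g (n + 2) * p.2 ≤ g n * g (n + 2)}
      = g (n + 1) ^ 2 + 3 * g (n + 1) + 4 := by
  obtain ⟨m, rfl⟩ := Nat.exists_eq_add_one_of_ne_zero (by omega : n ≠ 0)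
  have hk : Odd (2 * m + 1) := odd_two_mul_add_one m
  have h₁ : g (m + 1 + 1) = Nat.fib (2 * m + 1 + 2) := congrArg Nat.fib (by omega)
  have h₂ : g (m + 1 + 2) = Nat.fib (2 * m + 1 + 4) := congrArg Nat.fib (by omega)
  have h_count :
      2 * (latticeTriangle (Nat.fib (2 * m + 1)) (Nat.fib (2 * m + 1 + 4))).ncard = _ :=
    two_mul_ncard_latticeTriangle (Nat.fib_pos.2 hk.pos) (Nat.fib_pos.2 (by omega))
      (Nat.coprime_fib_fib_add_four_of_odd hk)
  have h_catalan := Nat.fib_mul_fib_add_four_of_odd hk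
  have h_sum := Nat.fib_add_fib_add_four (2 * m + 1)
  rw [h₁, h₂]
  refine ⟨h_count, h_count.trans ?_⟩
  linear_combination h_catalan + h_sum
end

section
/- Let k ≥ 1 and j ≥ 1 be integers. (i) Set p = F_{k+1} + j F_{k+2} and q = F_k + j F_{k+1}, and u = p/q. Then q²·(u² − 7u + 1) = j² + 7j + 1; equivalently, p² − 7pq + q² = j² + 7j + 1. (ii) Set p = L_k + j F_{k+1} and q = L_{k−1} + j F_k, and v = p/q. Then q²·(v² − 7v + 1) = j² − 5j − 5; equivalently, p² − 7pq + q² = j² − 5j − 5 (an identity of integers, whose right-hand side may be negative). -/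
/-- The Lucas numbers `ℓ_k = f_{k-1} + f_{k+1}` (for `k ≥ 1`). -/
def luc (k : ℕ) : ℕ := Nat.fib (k - 1) + Nat.fib (k + 1)

/-- `F_k = f_{4k}/3`. -/
def Fq (k : ℕ) : ℚ := (Nat.fib (4 * k) : ℚ) / 3

/-- `L_k = ℓ_{4k+2}/3`. -/
def Lq (k : ℕ) : ℚ := (luc (4 * k + 2) : ℚ) / 3

/-!
The form `Q(p, q) = p² − 7pq + q²` is invariant under `(p, q) ↦ (7p − q, p)`. Both `F_k` and
`L_k` satisfy `x_{k+2} = 7 x_{k+1} − x_k` (since `f_{n+8} + f_n = 7 f_{n+4}`), hence so does every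
combination `x_k = a_k + j b_k` of them, and `Q(x_{k+1}, x_k)` equals its value at `k = 0`.
-/

theorem sq_sub_seven_mul_add_sq_eq_of_rec {R : Type*} [CommRing R] {x : ℕ → R}
    (hx : ∀ n, x (n + 2) = 7 * x (n + 1) - x n) (n : ℕ) :
    x (n + 1) ^ 2 - 7 * x (n + 1) * x n + x n ^ 2 = x 1 ^ 2 - 7 * x 1 * x 0 + x 0 ^ 2 := by
  induction n with
  | zero => rfl
  | succ n ih => rw [hx]; linear_combination ih

theorem sq_mul_div_sq_sub_seven_mul_div_add_one {K : Type*} [Field K] (p : K) {q : K}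
    (hq : q ≠ 0) :
    q ^ 2 * ((p / q) ^ 2 - 7 * (p / q) + 1) = p ^ 2 - 7 * p * q + q ^ 2 := by
  field_simp

theorem Nat.fib_add_eight_add_fib (n : ℕ) : fib (n + 8) + fib n = 7 * fib (n + 4) := by
  simp only [fib_add_two]
  ring

theorem Fq_add_two (k : ℕ) : Fq (k + 2) = 7 * Fq (k + 1) - Fq k := by
  have h : (Nat.fib (4 * k + 8) : ℚ) + Nat.fib (4 * k) = 7 * Nat.fib (4 * k + 4) := by
    exact_mod_cast Nat.fib_add_eight_add_fib (4 * k)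
  simp only [Fq, show 4 * (k + 2) = 4 * k + 8 by ring, show 4 * (k + 1) = 4 * k + 4 by ring]
  linear_combination h / 3

theorem Lq_eq (k : ℕ) : Lq k = (Nat.fib (4 * k + 1) + Nat.fib (4 * k + 3) : ℚ) / 3 := by
  simp [Lq, luc]

theorem Lq_add_two (k : ℕ) : Lq (k + 2) = 7 * Lq (k + 1) - Lq k := by
  have h₁ : (Nat.fib (4 * k + 1 + 8) : ℚ) + Nat.fib (4 * k + 1) =
      7 * Nat.fib (4 * k + 1 + 4) := by
    exact_mod_cast Nat.fib_add_eight_add_fib (4 * k + 1)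
  have h₃ : (Nat.fib (4 * k + 3 + 8) : ℚ) + Nat.fib (4 * k + 3) =
      7 * Nat.fib (4 * k + 3 + 4) := by
    exact_mod_cast Nat.fib_add_eight_add_fib (4 * k + 3)
  simp only [Lq_eq, show 4 * (k + 2) + 1 = 4 * k + 1 + 8 by ring,
    show 4 * (k + 2) + 3 = 4 * k + 3 + 8 by ring, show 4 * (k + 1) + 1 = 4 * k + 1 + 4 by ring,
    show 4 * (k + 1) + 3 = 4 * k + 3 + 4 by ring]
  linear_combination (h₁ + h₃) / 3

theorem Fq_pos {k : ℕ} (hk : k ≠ 0) : 0 < Fq k := by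
  have : 0 < Nat.fib (4 * k) := Nat.fib_pos.mpr (by omega)
  unfold Fq
  positivity

theorem Lq_pos (k : ℕ) : 0 < Lq k := by
  have : 0 < Nat.fib (4 * k + 3) := Nat.fib_pos.mpr (by omega)
  rw [Lq_eq]
  positivity

theorem Fq_nonneg (k : ℕ) : 0 ≤ Fq k := by
  unfold Fq
  positivity

theorem quadForm_Fq (k : ℕ) (j : ℚ) :
    (Fq (k + 1) + j * Fq (k + 2)) ^ 2
        - 7 * (Fq (k + 1) + j * Fq (k + 2)) * (Fq k + j * Fq (k + 1))
        + (Fq k + j * Fq (k + 1)) ^ 2 = j ^ 2 + 7 * j + 1 := by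
  have hx : ∀ n, Fq (n + 2) + j * Fq (n + 3) =
      7 * (Fq (n + 1) + j * Fq (n + 2)) - (Fq n + j * Fq (n + 1)) :=
    fun n ↦ by linear_combination Fq_add_two n + j * Fq_add_two (n + 1)
  rw [sq_sub_seven_mul_add_sq_eq_of_rec (x := fun n ↦ Fq n + j * Fq (n + 1)) hx k]
  norm_num [Fq]
  ring

theorem quadForm_Lq (k : ℕ) (j : ℚ) :
    (Lq (k + 1) + j * Fq (k + 2)) ^ 2
        - 7 * (Lq (k + 1) + j * Fq (k + 2)) * (Lq k + j * Fq (k + 1))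
        + (Lq k + j * Fq (k + 1)) ^ 2 = j ^ 2 - 5 * j - 5 := by
  have hx : ∀ n, Lq (n + 2) + j * Fq (n + 3) =
      7 * (Lq (n + 1) + j * Fq (n + 2)) - (Lq n + j * Fq (n + 1)) :=
    fun n ↦ by linear_combination Lq_add_two n + j * Fq_add_two (n + 1)
  rw [sq_sub_seven_mul_add_sq_eq_of_rec (x := fun n ↦ Lq n + j * Fq (n + 1)) hx k]
  norm_num [Lq_eq, Fq]
  ring

theorem stmt_16_general (k j : ℕ) (hk : 1 ≤ k) :
    ((Fq k + j * Fq (k + 1)) ^ 2 *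
        (((Fq (k + 1) + j * Fq (k + 2)) / (Fq k + j * Fq (k + 1))) ^ 2
          - 7 * ((Fq (k + 1) + j * Fq (k + 2)) / (Fq k + j * Fq (k + 1))) + 1)
      = (j : ℚ) ^ 2 + 7 * j + 1 ∧
     (Fq (k + 1) + j * Fq (k + 2)) ^ 2
        - 7 * (Fq (k + 1) + j * Fq (k + 2)) * (Fq k + j * Fq (k + 1))
        + (Fq k + j * Fq (k + 1)) ^ 2
      = (j : ℚ) ^ 2 + 7 * j + 1) ∧
    ((Lq (k - 1) + j * Fq k) ^ 2 *
        (((Lq k + j * Fq (k + 1)) / (Lq (k - 1) + j * Fq k)) ^ 2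
          - 7 * ((Lq k + j * Fq (k + 1)) / (Lq (k - 1) + j * Fq k)) + 1)
      = (j : ℚ) ^ 2 - 5 * j - 5 ∧
     (Lq k + j * Fq (k + 1)) ^ 2
        - 7 * (Lq k + j * Fq (k + 1)) * (Lq (k - 1) + j * Fq k)
        + (Lq (k - 1) + j * Fq k) ^ 2
      = (j : ℚ) ^ 2 - 5 * j - 5) := by
  obtain ⟨k, rfl⟩ : ∃ m, k = m + 1 := ⟨k - 1, by omega⟩
  simp only [Nat.add_sub_cancel]
  have hjF : 0 ≤ (j : ℚ) * Fq (k + 2) := mul_nonneg j.cast_nonneg (Fq_nonneg _)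
  have hjL : 0 ≤ (j : ℚ) * Fq (k + 1) := mul_nonneg j.cast_nonneg (Fq_nonneg _)
  have hqF : Fq (k + 1) + j * Fq (k + 2) ≠ 0 :=
    (add_pos_of_pos_of_nonneg (Fq_pos k.succ_ne_zero) hjF).ne'
  have hqL : Lq k + j * Fq (k + 1) ≠ 0 := (add_pos_of_pos_of_nonneg (Lq_pos k) hjL).ne'
  rw [sq_mul_div_sq_sub_seven_mul_div_add_one _ hqF, sq_mul_div_sq_sub_seven_mul_div_add_one _ hqL,
    and_self, and_self]
  exact ⟨quadForm_Fq (k + 1) j, quadForm_Lq k j⟩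

/-- **Corollary 4.6 (co:hh).** For `k ≥ 1` and `j ≥ 1`:
(i) with `p = F_{k+1} + jF_{k+2}`, `q = F_k + jF_{k+1}`, `u = p/q`, one has
`q²(u² − 7u + 1) = j² + 7j + 1`, equivalently `p² − 7pq + q² = j² + 7j + 1`;
(ii) with `p = L_k + jF_{k+1}`, `q = L_{k−1} + jF_k`, `v = p/q`, one has
`q²(v² − 7v + 1) = j² − 5j − 5`, equivalently `p² − 7pq + q² = j² − 5j − 5`. -/
theorem stmt_16 (k j : ℕ) (hk : 1 ≤ k) (hj : 1 ≤ j) :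
    ((Fq k + j * Fq (k + 1)) ^ 2 *
        (((Fq (k + 1) + j * Fq (k + 2)) / (Fq k + j * Fq (k + 1))) ^ 2
          - 7 * ((Fq (k + 1) + j * Fq (k + 2)) / (Fq k + j * Fq (k + 1))) + 1)
      = (j : ℚ) ^ 2 + 7 * j + 1 ∧
     (Fq (k + 1) + j * Fq (k + 2)) ^ 2
        - 7 * (Fq (k + 1) + j * Fq (k + 2)) * (Fq k + j * Fq (k + 1))
        + (Fq k + j * Fq (k + 1)) ^ 2
      = (j : ℚ) ^ 2 + 7 * j + 1) ∧
    ((Lq (k - 1) + j * Fq k) ^ 2 *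
        (((Lq k + j * Fq (k + 1)) / (Lq (k - 1) + j * Fq k)) ^ 2
          - 7 * ((Lq k + j * Fq (k + 1)) / (Lq (k - 1) + j * Fq k)) + 1)
      = (j : ℚ) ^ 2 - 5 * j - 5 ∧
     (Lq k + j * Fq (k + 1)) ^ 2
        - 7 * (Lq k + j * Fq (k + 1)) * (Lq (k - 1) + j * Fq k)
        + (Lq (k - 1) + j * Fq k) ^ 2
      = (j : ℚ) ^ 2 - 5 * j - 5) :=
  stmt_16_general k j hk
end
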